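/- arXiv:1601.03876 — 5 statements merged into one kernel-verified Lean document; each statement's English description precedes it below -/
import Mathlib

section
/- Let L : ℕ → ℝ and f : ℕ → ℝ be sequences with L(t) ≥ 0 and f(t) ≥ 0 for all t, let T ≥ 1 be an integer, and let D ≥ 0 and δ > 0 be constants such that the T-slot drift bound L(t+T) − L(t) ≤ D − δ·f(t) holds for every t ∈ ℕ. Then limsup_{S→∞} (1/S) ∑_{t=0}^{S−1} f(t) ≤ D/δ. -/
open Filter

/-- T-slot Lyapunov drift criterion: if `L, f ≥ 0`, `T ≥ 1`,
`D ≥ 0`, `δ > 0` and `L(t+T) − L(t) ≤ D − δ f(t)` for all `t`, then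
`limsup_S (1/S) ∑_{t<S} f(t) ≤ D/δ`. -/
theorem T_slot_lyapunov_drift_strong_stability (L f : ℕ → ℝ) (T : ℕ) (D δ : ℝ)
    (hL : ∀ t, 0 ≤ L t) (hf : ∀ t, 0 ≤ f t)
    (hT : 1 ≤ T) (hD : 0 ≤ D) (hδ : 0 < δ)
    (hdrift : ∀ t, L (t + T) - L t ≤ D - δ * f t) :
    limsup (fun S : ℕ => (∑ t ∈ Finset.range S, f t) / (S : ℝ)) atTop ≤ D / δ := by
  set C : ℝ := ∑ t ∈ Finset.range T, L t with hC
  have hC0 : 0 ≤ C := Finset.sum_nonneg fun t _ => hL t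
  -- key summed bound
  have key : ∀ S : ℕ, δ * ∑ t ∈ Finset.range S, f t ≤ S * D + C := by
    intro S
    have h1 : ∑ t ∈ Finset.range S, δ * f t ≤
        ∑ t ∈ Finset.range S, (D + (L t - L (t + T))) := by
      refine Finset.sum_le_sum fun t _ => ?_
      have := hdrift t; linarith
    have h2 : ∑ t ∈ Finset.range S, (D + (L t - L (t + T)))
        = S * D + (∑ t ∈ Finset.range S, L t - ∑ t ∈ Finset.range S, L (t + T)) := by
      rw [Finset.sum_add_distrib, Finset.sum_const, Finset.sum_sub_distrib]
      simp [Finset.card_range, mul_comm]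
    have h3 : ∑ t ∈ Finset.range S, L t - ∑ t ∈ Finset.range S, L (t + T) ≤ C := by
      have hshift : ∑ t ∈ Finset.range S, L (t + T) = ∑ t ∈ Finset.Ico T (T + S), L t := by
        rw [Finset.sum_Ico_eq_sum_range]
        simp [Nat.add_sub_cancel_left, add_comm]
      have hsplit : ∑ t ∈ Finset.range (T + S), L t
          = C + ∑ t ∈ Finset.Ico T (T + S), L t := by
        rw [Finset.range_eq_Ico, ← Finset.sum_Ico_consecutive L (Nat.zero_le T) (Nat.le_add_right T S)]
        rw [hC, Finset.range_eq_Ico]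
      have hmono : ∑ t ∈ Finset.range S, L t ≤ ∑ t ∈ Finset.range (T + S), L t :=
        Finset.sum_le_sum_of_subset_of_nonneg
          (Finset.range_subset_range.2 (Nat.le_add_left S T)) (fun t _ _ => hL t)
      rw [hshift]
      linarith [hsplit, hmono]
    calc δ * ∑ t ∈ Finset.range S, f t = ∑ t ∈ Finset.range S, δ * f t := by
          rw [Finset.mul_sum]
      _ ≤ S * D + (∑ t ∈ Finset.range S, L t - ∑ t ∈ Finset.range S, L (t + T)) := by
          rw [← h2]; exact h1
      _ ≤ S * D + C := by linarith
  -- pointwise bound by a sequence tending to D/δ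
  have hbound : ∀ S : ℕ, (∑ t ∈ Finset.range S, f t) / (S : ℝ) ≤ D / δ + (C / δ) / S := by
    intro S
    rcases Nat.eq_zero_or_pos S with rfl | hS
    · simp [div_nonneg hD hδ.le]
    · have hSpos : (0 : ℝ) < S := by exact_mod_cast hS
      have hsum : ∑ t ∈ Finset.range S, f t ≤ (S * D + C) / δ := by
        rw [le_div_iff₀ hδ, mul_comm]; exact key S
      rw [div_le_iff₀ hSpos]
      calc ∑ t ∈ Finset.range S, f t ≤ (S * D + C) / δ := hsum
        _ = (D / δ + (C / δ) / S) * S := by field_simp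
  have htend : Tendsto (fun S : ℕ => D / δ + (C / δ) / (S : ℝ)) atTop (nhds (D / δ)) := by
    have : Tendsto (fun S : ℕ => (C / δ) / (S : ℝ)) atTop (nhds 0) :=
      tendsto_const_div_atTop_nhds_zero_nat _
    simpa using tendsto_const_nhds.add this
  calc limsup (fun S : ℕ => (∑ t ∈ Finset.range S, f t) / (S : ℝ)) atTop
      ≤ limsup (fun S : ℕ => D / δ + (C / δ) / (S : ℝ)) atTop := by
        refine limsup_le_limsup (Eventually.of_forall hbound) ?_ ?_
        · exact IsBoundedUnder.isCoboundedUnder_le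
            ⟨0, by
            simp only [eventually_map]
            exact Eventually.of_forall fun (n : ℕ) =>
              div_nonneg (Finset.sum_nonneg fun t _ => hf t) (Nat.cast_nonneg n)⟩
        · exact htend.isBoundedUnder_le
    _ = D / δ := htend.limsup_eq
end

section
/- Fix a capacity C ∈ ℕ, a threshold θ ∈ ℕ, an initial backlog p₀ ∈ ℕ, and an arbitrary arrival sequence a : ℕ → ℕ. Define the backlog P of the greedy computation policy by P(0) = p₀ and P(t+1) = P(t) + a(t) − min(C, P(t) + a(t)), and the backlog P' of the threshold computation policy by P'(0) = p₀ and P'(t+1) = P'(t) + a(t) − C if P'(t) + a(t) ≥ C + θ, and P'(t+1) = P'(t) + a(t) otherwise. Then P(t) ≤ P'(t) for every t ∈ ℕ. -/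
/-- Sample-path dominance of the greedy computation policy over the
threshold policy: for capacity `C`, threshold `θ`, common initial backlog `p₀`
and common arrival sequence `a`, the greedy backlog
`P(t+1) = P(t) + a(t) − min(C, P(t)+a(t))` is pointwise no larger than the
threshold backlog `P'(t+1) = P'(t)+a(t) − C` if `P'(t)+a(t) ≥ C+θ`,
`P'(t+1) = P'(t)+a(t)` otherwise. -/
theorem greedy_dominates_threshold (C θ p₀ : ℕ) (a P P' : ℕ → ℕ)
    (hP0 : P 0 = p₀)
    (hP : ∀ t, P (t + 1) = P t + a t - min C (P t + a t))
    (hP'0 : P' 0 = p₀)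
    (hP' : ∀ t, P' (t + 1) =
      if C + θ ≤ P' t + a t then P' t + a t - C else P' t + a t) :
    ∀ t, P t ≤ P' t := by
  intro t
  induction t with
  | zero => omega
  | succ t ih =>
    rw [hP t, hP' t]
    split <;> omega
end

section
/- Let q : ℕ → ℝ be a sequence with q(t) ≥ 0 for all t. If limsup_{T→∞} (1/T) ∑_{t=0}^{T−1} q(t) < ∞, then liminf_{T→∞} q(T)/T = 0. -/
open Filter

/-- Strong stability implies rate stability along a subsequence:
if `q ≥ 0` and `limsup_T (1/T) ∑_{t<T} q(t) < ∞` (i.e. the averages are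
eventually bounded above), then `liminf_T q(T)/T = 0`. -/
theorem strong_stability_implies_rate_stability (q : ℕ → ℝ)
    (hq : ∀ t, 0 ≤ q t)
    (hstable : IsBoundedUnder (· ≤ ·) atTop
      (fun T : ℕ => (∑ t ∈ Finset.range T, q t) / (T : ℝ))) :
    liminf (fun T : ℕ => q T / (T : ℝ)) atTop = 0 := by
  obtain ⟨C, hC⟩ := hstable
  rw [eventually_map, eventually_atTop] at hC
  obtain ⟨M, hM⟩ := hC
  have key : ∀ ε : ℝ, 0 < ε → ∃ᶠ T in atTop, q T / (T : ℝ) ≤ ε := by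
    intro ε hε
    by_contra h
    rw [not_frequently] at h
    rw [eventually_atTop] at h
    obtain ⟨N, hN⟩ := h
    set T : ℕ := max (max N M) (⌊2 * C / ε⌋₊ + 1) with hT
    have hT1 : 1 ≤ T := le_trans (Nat.le_add_left 1 _) (le_max_right _ _)
    have hTN : N ≤ T := le_trans (le_max_left _ _) (le_max_left _ _)
    have hTM : M ≤ T := le_trans (le_max_right _ _) (le_max_left _ _)
    have hTC : 2 * C / ε < (T : ℝ) := by
      calc 2 * C / ε < (⌊2 * C / ε⌋₊ + 1 : ℕ) := by
            push_cast; exact Nat.lt_floor_add_one _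
        _ ≤ (T : ℝ) := by exact_mod_cast Nat.cast_le.mpr (le_max_right _ _)
    -- lower bound on partial sum up to 2T
    have hsum : ε * T * T ≤ ∑ t ∈ Finset.range (2 * T), q t := by
      have h1 : ∑ t ∈ Finset.Ico T (2 * T), q t ≤ ∑ t ∈ Finset.range (2 * T), q t := by
        apply Finset.sum_le_sum_of_subset_of_nonneg
        · intro x hx
          simp only [Finset.mem_Ico] at hx
          exact Finset.mem_range.mpr hx.2
        · intro i _ _; exact hq i
      have h2 : ∑ t ∈ Finset.Ico T (2 * T), (ε * T) ≤ ∑ t ∈ Finset.Ico T (2 * T), q t := by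
        apply Finset.sum_le_sum
        intro i hi
        simp only [Finset.mem_Ico] at hi
        have hiN : N ≤ i := le_trans hTN hi.1
        have hqi : ε < q i / (i : ℝ) := lt_of_not_ge (hN i hiN)
        have hipos : (0 : ℝ) < i := by
          exact_mod_cast lt_of_lt_of_le hT1 hi.1
        have : ε * i < q i := by
          rw [lt_div_iff₀ hipos] at hqi
          linarith
        have hTi : (T : ℝ) ≤ i := by exact_mod_cast hi.1
        nlinarith
      have hcard : (Finset.Ico T (2 * T)).card = T := by
        rw [Nat.card_Ico]; omega
      rw [Finset.sum_const, hcard, nsmul_eq_mul] at h2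
      calc ε * T * T = (T : ℝ) * (ε * T) := by ring
        _ ≤ ∑ t ∈ Finset.Ico T (2 * T), q t := h2
        _ ≤ _ := h1
    have hM2T : M ≤ 2 * T := by omega
    have havg : (∑ t ∈ Finset.range (2 * T), q t) / ((2 * T : ℕ) : ℝ) ≤ C := hM (2 * T) hM2T
    have h2T : (0 : ℝ) < (2 * T : ℕ) := by exact_mod_cast by omega
    rw [div_le_iff₀ h2T] at havg
    have hTpos : (0 : ℝ) < T := by exact_mod_cast hT1
    have : ε * T * T ≤ C * ((2 * T : ℕ) : ℝ) := le_trans hsum havg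
    have h2TC : ((2 * T : ℕ) : ℝ) = 2 * (T : ℝ) := by push_cast; ring
    rw [h2TC] at this
    have : ε * T ≤ 2 * C := by nlinarith
    rw [div_lt_iff₀ hε] at hTC
    nlinarith
  have hbdd : IsBoundedUnder (· ≥ ·) atTop (fun T : ℕ => q T / (T : ℝ)) :=
    ⟨0, eventually_map.mpr <| Eventually.of_forall fun T => div_nonneg (hq T) (Nat.cast_nonneg T)⟩
  apply le_antisymm
  · apply le_of_forall_pos_le_add
    intro ε hε
    have := liminf_le_of_frequently_le (key ε hε) hbdd
    linarith
  · apply le_liminf_of_le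
    · refine ⟨1, fun a ha => ?_⟩
      rw [eventually_map] at ha
      obtain ⟨x, hx1, hx2⟩ := (ha.and_frequently (key 1 one_pos)).exists
      exact le_trans hx1 hx2
    · exact Eventually.of_forall fun T => div_nonneg (hq T) (Nat.cast_nonneg T)
end

section
/- Let (Ω, F, ℙ) be a probability space, let C ≥ 0 and λ be real numbers, and let A(t), Q(t) : Ω → ℝ, t ∈ ℕ, be integrable random variables such that: Q(t) ≥ 0 almost surely for all t, Q(0) = 0 almost surely, E[A(t)] = λ for all t, and Q(t+1) ≥ Q(t) + A(t) − C almost surely for all t. If limsup_{T→∞} (1/T) ∑_{t=0}^{T−1} E[Q(t)] < ∞, then λ ≤ C. -/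
open Filter MeasureTheory

/-- Necessity of `λ ≤ C` for strong stability of a computation
queue: if `Q(t) ≥ 0` a.s., `Q(0) = 0` a.s., `E[A(t)] = λ`,
`Q(t+1) ≥ Q(t) + A(t) − C` a.s., and the time-averaged expected backlog
`limsup_T (1/T) ∑_{t<T} E[Q(t)]` is finite, then `λ ≤ C`. -/
theorem stability_implies_rate_le_capacity {Ω : Type*} [MeasureSpace Ω]
    (hprob : IsProbabilityMeasure (volume : Measure Ω))
    (C lam : ℝ) (hC : 0 ≤ C)
    (A Q : ℕ → Ω → ℝ)
    (hAint : ∀ t, Integrable (A t))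
    (hQint : ∀ t, Integrable (Q t))
    (hQnn : ∀ t, 0 ≤ᵐ[volume] Q t)
    (hQ0 : Q 0 =ᵐ[volume] 0)
    (hAmean : ∀ t, ∫ ω, A t ω = lam)
    (hrec : ∀ t, ∀ᵐ ω, Q t ω + A t ω - C ≤ Q (t + 1) ω)
    (hstable : IsBoundedUnder (· ≤ ·) atTop
      (fun T : ℕ => (∑ t ∈ Finset.range T, ∫ ω, Q t ω) / (T : ℝ))) :
    lam ≤ C := by
  by_contra hlt
  push_neg at hlt
  set δ := lam - C with hδ
  have hδpos : 0 < δ := by simp [hδ]; linarith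
  -- step: E[Q(t+1)] ≥ E[Q t] + δ
  have hstep : ∀ t, (∫ ω, Q t ω) + δ ≤ ∫ ω, Q (t+1) ω := by
    intro t
    have h1 : ∫ ω, (Q t ω + A t ω - C) ≤ ∫ ω, Q (t+1) ω :=
      integral_mono_ae (((hQint t).add (hAint t)).sub (integrable_const C))
        (hQint (t+1)) (hrec t)
    have h2 : ∫ ω, (Q t ω + A t ω - C) = (∫ ω, Q t ω) + lam - C := by
      have e1 : ∫ ω, (Q t ω + A t ω - C) = (∫ ω, (Q t ω + A t ω)) - ∫ _ω, (C : ℝ) :=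
        integral_sub ((hQint t).add (hAint t)) (integrable_const C)
      have e2 : ∫ ω, (Q t ω + A t ω) = (∫ ω, Q t ω) + ∫ ω, A t ω :=
        integral_add (hQint t) (hAint t)
      have e3 : ∫ _ω : Ω, (C : ℝ) = C := by simp
      rw [e1, e2, e3, hAmean]
    rw [h2] at h1
    simp only [hδ]
    linarith
  have hQ0' : ∫ ω, Q 0 ω = 0 := by
    rw [integral_congr_ae hQ0]; simp
  have hlb : ∀ t : ℕ, (t : ℝ) * δ ≤ ∫ ω, Q t ω := by
    intro t
    induction t with
    | zero => simp [hQ0']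
    | succ n ih =>
      have := hstep n
      push_cast
      linarith
  obtain ⟨b, hb⟩ := hstable
  simp only [eventually_map, eventually_atTop] at hb
  obtain ⟨N, hN⟩ := hb
  -- choose T large
  obtain ⟨T, hT1, hT2⟩ : ∃ T : ℕ, N ≤ T ∧ max 1 (2 * b / δ + 2) ≤ (T : ℝ) := by
    obtain ⟨T, hT⟩ := exists_nat_ge (max (N : ℝ) (max 1 (2 * b / δ + 2)))
    exact ⟨T, by exact_mod_cast le_trans (le_max_left _ _) hT,
      le_trans (le_max_right _ _) hT⟩
  have hT1' : (1 : ℝ) ≤ T := le_trans (le_max_left _ _) hT2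
  have hTpos : (0 : ℝ) < T := by linarith
  have hsum : (∑ t ∈ Finset.range T, (t : ℝ) * δ) ≤ ∑ t ∈ Finset.range T, ∫ ω, Q t ω :=
    Finset.sum_le_sum fun t _ => hlb t
  have gauss : ∀ n : ℕ, (∑ t ∈ Finset.range n, (t : ℝ)) * 2 = (n : ℝ) * ((n : ℝ) - 1) := by
    intro n
    induction n with
    | zero => simp
    | succ m ih =>
      rw [Finset.sum_range_succ]
      push_cast
      nlinarith [ih]
  have hsumval : (∑ t ∈ Finset.range T, (t : ℝ) * δ) = (T : ℝ) * (T - 1) / 2 * δ := by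
    rw [← Finset.sum_mul]
    congr 1
    linarith [gauss T]
  have hdiv : (T : ℝ) * (T - 1) / 2 * δ / T ≤ b := by
    calc (T : ℝ) * (T - 1) / 2 * δ / T
        ≤ (∑ t ∈ Finset.range T, ∫ ω, Q t ω) / T := by
          rw [div_le_div_iff_of_pos_right hTpos, ← hsumval]
          exact hsum
      _ ≤ b := hN T hT1
  have hval : (T : ℝ) * (T - 1) / 2 * δ / T = (T - 1) / 2 * δ := by
    field_simp
  rw [hval] at hdiv
  have hT3 : 2 * b / δ + 2 ≤ (T : ℝ) := le_trans (le_max_right _ _) hT2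
  have : 2 * b / δ < T - 1 := by linarith
  have h2 : 2 * b < (T - 1) * δ := by
    rw [div_lt_iff₀ hδpos] at this; linarith
  nlinarith [hdiv]
end

section
/- Let M be a finite set (of computation nodes), C_m ≥ 0 a capacity for each m ∈ M, and λ a real number. Let q : ℕ → ℝ be a sequence with q(t) ≥ 0 for all t and q(0) = 0, and let z_m : ℕ → ℝ satisfy 0 ≤ z_m(t) ≤ C_m for all m and t, such that q(t+1) ≥ q(t) + λ − ∑_{m∈M} z_m(t) for all t. If limsup_{T→∞} (1/T) ∑_{t=0}^{T−1} q(t) < ∞, then λ ≤ ∑_{m∈M} C_m. -/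
open Filter

lemma sum_range_cast_real (n : ℕ) :
    ∑ t ∈ Finset.range n, (t : ℝ) = (n : ℝ) * ((n : ℝ) - 1) / 2 := by
  induction n with
  | zero => simp
  | succ k ih => rw [Finset.sum_range_succ, ih]; push_cast; ring

/-- Aggregate-capacity necessity with multiple computation nodes:
if `q(t) ≥ 0`, `q(0) = 0`, `0 ≤ z_m(t) ≤ C_m`,
`q(t+1) ≥ q(t) + λ − ∑_m z_m(t)`, and the averages
`(1/T) ∑_{t<T} q(t)` are bounded, then `λ ≤ ∑_m C_m`. -/
theorem stability_implies_rate_le_total_capacity {M : Type*} [Fintype M]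
    (Cap : M → ℝ) (hCap : ∀ m, 0 ≤ Cap m) (lam : ℝ)
    (q : ℕ → ℝ) (z : ℕ → M → ℝ)
    (hq_nn : ∀ t, 0 ≤ q t) (hq0 : q 0 = 0)
    (hz_nn : ∀ t m, 0 ≤ z t m) (hz_le : ∀ t m, z t m ≤ Cap m)
    (hrec : ∀ t, q t + lam - ∑ m, z t m ≤ q (t + 1))
    (hstable : IsBoundedUnder (· ≤ ·) atTop
      (fun T : ℕ => (∑ t ∈ Finset.range T, q t) / (T : ℝ))) :
    lam ≤ ∑ m, Cap m := by
  by_contra hlt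
  push_neg at hlt
  set ε : ℝ := lam - ∑ m, Cap m with hε
  have hεpos : 0 < ε := by simp [hε]; linarith
  have hlin : ∀ t : ℕ, (t : ℝ) * ε ≤ q t := by
    intro t
    induction t with
    | zero => simp [hq0]
    | succ n ih =>
      have hz : ∑ m, z n m ≤ ∑ m, Cap m :=
        Finset.sum_le_sum fun m _ => hz_le n m
      have := hrec n
      push_cast
      nlinarith
  obtain ⟨b, hb⟩ := hstable
  rw [eventually_map, eventually_atTop] at hb
  obtain ⟨N, hN⟩ := hb
  obtain ⟨T, hT1, hT2⟩ : ∃ T : ℕ, max N 1 ≤ T ∧ b < ((T : ℝ) - 1) / 2 * ε := by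
    obtain ⟨T, hT⟩ := exists_nat_gt (max ((max N 1 : ℕ) : ℝ) (2 * b / ε + 1))
    refine ⟨T, ?_, ?_⟩
    · exact_mod_cast le_of_lt (lt_of_le_of_lt (le_max_left _ _) hT)
    · have h2 : 2 * b / ε + 1 < (T : ℝ) := lt_of_le_of_lt (le_max_right _ _) hT
      rw [div_mul_eq_mul_div, lt_div_iff₀ (by norm_num : (0:ℝ) < 2)]
      have := (div_lt_iff₀ hεpos).mp (by linarith : 2 * b / ε < (T : ℝ) - 1)
      linarith
  have hTpos : (0 : ℝ) < T := by
    have : 1 ≤ T := le_trans (le_max_right N 1) hT1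
    exact_mod_cast this
  have hsum : (T : ℝ) * ((T : ℝ) - 1) / 2 * ε ≤ ∑ t ∈ Finset.range T, q t := by
    calc (T : ℝ) * ((T : ℝ) - 1) / 2 * ε = ∑ t ∈ Finset.range T, (t : ℝ) * ε := by
          rw [← Finset.sum_mul, sum_range_cast_real]
      _ ≤ _ := Finset.sum_le_sum fun t _ => hlin t
  have havg : ((T : ℝ) - 1) / 2 * ε ≤ (∑ t ∈ Finset.range T, q t) / (T : ℝ) := by
    rw [le_div_iff₀ hTpos]
    calc ((T : ℝ) - 1) / 2 * ε * (T : ℝ) = (T : ℝ) * ((T : ℝ) - 1) / 2 * ε := by ring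
      _ ≤ _ := hsum
  have := hN T (le_trans (le_max_left N 1) hT1)
  simp only at this
  linarith
end
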